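/- A prebornology 𝓑 on a set X is a bornology (i.e., closed under arbitrary finite unions, including unions of disjoint members) if and only if every finite subset of X is bounded (i.e., belongs to 𝓑). -/

import Mathlib

/-- A prebornology on a set `X`: a cover of `X` that is downward closed and
closed under unions of two intersecting members. -/
structure Prebornology (X : Type*) where
  carrier : Set (Set X)
  covers : ⋃₀ carrier = Set.univ
  downward : ∀ ⦃B C : Set X⦄, B ∈ carrier → C ⊆ B → C ∈ carrier
  union_inter : ∀ ⦃B C : Set X⦄, B ∈ carrier → C ∈ carrier →
    (B ∩ C).Nonempty → B ∪ C ∈ carrier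

/-! Singletons are bounded because the prebornology covers `X`; a finite set is then a finite
union of singletons. Conversely, two bounded sets `B ∋ b` and `C ∋ c` are joined through the
bounded pair `{b, c}`, which meets both of them. -/

namespace Prebornology

variable {X : Type*} (𝓑 : Prebornology X)

theorem singleton_mem (x : X) : {x} ∈ 𝓑.carrier := by
  obtain ⟨B, hB, hxB⟩ : x ∈ ⋃₀ 𝓑.carrier := by rw [𝓑.covers]; trivial
  exact 𝓑.downward hB (Set.singleton_subset_iff.mpr hxB)

theorem finite_mem_of_union_mem (hempty : ∅ ∈ 𝓑.carrier)
    (hunion : ∀ B ∈ 𝓑.carrier, ∀ C ∈ 𝓑.carrier, B ∪ C ∈ 𝓑.carrier)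
    {S : Set X} (hS : S.Finite) : S ∈ 𝓑.carrier := by
  induction S, hS using Set.Finite.induction_on with
  | empty => exact hempty
  | @insert a s _ _ ih => exact Set.insert_eq a s ▸ hunion _ (𝓑.singleton_mem a) _ ih

theorem union_mem_of_pair_mem {B C : Set X} {b c : X} (hB : B ∈ 𝓑.carrier)
    (hC : C ∈ 𝓑.carrier) (hb : b ∈ B) (hc : c ∈ C) (hbc : {b, c} ∈ 𝓑.carrier) :
    B ∪ C ∈ 𝓑.carrier := by
  have hB' : B ∪ {b, c} ∈ 𝓑.carrier := 𝓑.union_inter hB hbc ⟨b, hb, by simp⟩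
  have hBC : (B ∪ {b, c}) ∪ C ∈ 𝓑.carrier := 𝓑.union_inter hB' hC ⟨c, by simp, hc⟩
  exact 𝓑.downward hBC (Set.union_subset_union_left C Set.subset_union_left)

theorem union_mem_of_finite_mem (hfin : ∀ S : Set X, S.Finite → S ∈ 𝓑.carrier)
    {B C : Set X} (hB : B ∈ 𝓑.carrier) (hC : C ∈ 𝓑.carrier) : B ∪ C ∈ 𝓑.carrier := by
  rcases B.eq_empty_or_nonempty with rfl | ⟨b, hb⟩
  · simpa using hC
  rcases C.eq_empty_or_nonempty with rfl | ⟨c, hc⟩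
  · simpa using hB
  exact 𝓑.union_mem_of_pair_mem hB hC hb hc (hfin _ (Set.toFinite {b, c}))

end Prebornology

theorem prebornology_isBornology_iff_finite_bounded
    {X : Type*} (𝓑 : Prebornology X) :
    (∅ ∈ 𝓑.carrier ∧ ∀ B ∈ 𝓑.carrier, ∀ C ∈ 𝓑.carrier, B ∪ C ∈ 𝓑.carrier) ↔
    (∀ S : Set X, S.Finite → S ∈ 𝓑.carrier) :=
  ⟨fun ⟨hempty, hunion⟩ _ hS => 𝓑.finite_mem_of_union_mem hempty hunion hS,
    fun hfin => ⟨hfin ∅ Set.finite_empty, fun _ hB _ hC => 𝓑.union_mem_of_finite_mem hfin hB hC⟩⟩
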